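/- Let λ be an infinite cardinal and let s = (K,⪯,⌣,S^bs) be a semi-good non-forking λ-frame such that K satisfies amalgamation in λ⁺ and (K,⪯) is (λ,λ⁺)-tame. Then the lifted frame s⁺ satisfies basic stability: for every M ∈ K_{λ⁺}, the set S^bs(M) of basic types over M has cardinality at most λ⁺. -/

import Mathlib

universe u

open Set Cardinal

set_option autoImplicit false

/-- Abstract data for an abstract elementary class (AEC) together with an abstract
assignment of Galois types.  Models are identified with their carrier sets,
which are subsets of a fixed universe `α` of elements. -/
structure AECData (α : Type u) : Type (u + 1) where
  /-- the class of (carriers of) models -/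
  K : Set (Set α)
  /-- the strong substructure relation `⪯` -/
  le : Set α → Set α → Prop
  /-- `emb f M N` : `f` is a `⪯`-embedding of the model `M` into the model `N` -/
  emb : (α → α) → Set α → Set α → Prop
  /-- the (abstract) collection of Galois types -/
  Tp : Type u
  /-- `tp a M N` : the Galois type of `a` over `M` as computed inside `N` -/
  tp : α → Set α → Set α → Tp
  /-- restriction of a Galois type to a smaller model -/
  res : Tp → Set α → Tp
  le_mem : ∀ {M N : Set α}, le M N → M ∈ K ∧ N ∈ K
  le_refl : ∀ M ∈ K, le M M
  le_trans : ∀ {M N P : Set α}, le M N → le N P → le M P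
  le_subset : ∀ {M N : Set α}, le M N → M ⊆ N
  coherence : ∀ {M N P : Set α}, le M P → le N P → M ⊆ N → le M N
  chain_union_le : ∀ {I : Type u} [LinearOrder I] [Nonempty I] (Ms : I → Set α),
    (∀ i j : I, i ≤ j → le (Ms i) (Ms j)) → ∀ i : I, le (Ms i) (⋃ j, Ms j)
  smoothness : ∀ {I : Type u} [LinearOrder I] [Nonempty I] (Ms : I → Set α) (N : Set α),
    (∀ i j : I, i ≤ j → le (Ms i) (Ms j)) → (∀ i : I, le (Ms i) N) → le (⋃ j, Ms j) N
  emb_id : ∀ {M N : Set α}, le M N → emb id M N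
  emb_inj : ∀ {f : α → α} {M N : Set α}, emb f M N → Set.InjOn f M
  emb_image_le : ∀ {f : α → α} {M N : Set α}, emb f M N → le (f '' M) N
  emb_le_left : ∀ {f : α → α} {M M' N : Set α}, emb f M N → le M' M → emb f M' N
  emb_le_right : ∀ {f : α → α} {M N N' : Set α}, emb f M N → le N N' → emb f M N'
  emb_comp : ∀ {f g : α → α} {M N P : Set α}, emb f M N → emb g N P → emb (g ∘ f) M P
  tp_invariant : ∀ {f : α → α} {M N N' : Set α} {a : α},
    le M N → a ∈ N → emb f N N' → Set.EqOn f id M → tp (f a) M N' = tp a M N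
  tp_mono : ∀ {M N N' : Set α} {a : α}, le M N → le N N' → a ∈ N → tp a M N' = tp a M N
  res_tp : ∀ {M₀ M N : Set α} {a : α},
    le M₀ M → le M N → a ∈ N → res (tp a M N) M₀ = tp a M₀ N

namespace AECData

variable {α : Type u}

/-- the models in `K` of cardinality exactly `lam` -/
def inCard (D : AECData α) (lam : Cardinal.{u}) (M : Set α) : Prop :=
  M ∈ D.K ∧ Cardinal.mk M = lam

/-- the set of Galois types over a model `M` -/
def S (D : AECData α) (M : Set α) : Set D.Tp :=
  {p | ∃ (N : Set α) (a : α), D.le M N ∧ a ∈ N ∧ p = D.tp a M N}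

/-- `(lam, lam⁺)`-tameness: types over models of cardinality `lam⁺` are determined by
their restrictions to `⪯`-submodels of cardinality `lam`. -/
def Tame (D : AECData α) (lam : Cardinal.{u}) : Prop :=
  ∀ M : Set α, D.inCard (Order.succ lam) M →
    ∀ p ∈ D.S M, ∀ q ∈ D.S M,
      (∀ N : Set α, D.inCard lam N → D.le N M → D.res p N = D.res q N) → p = q

/-- the amalgamation property in cardinality `mu` -/
def AmalgIn (D : AECData α) (mu : Cardinal.{u}) : Prop :=
  ∀ M₀ M₁ M₂ : Set α, D.inCard mu M₀ → D.inCard mu M₁ → D.inCard mu M₂ →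
    D.le M₀ M₁ → D.le M₀ M₂ →
    ∃ (N : Set α) (f : α → α), N ∈ D.K ∧ D.le M₁ N ∧ D.emb f M₂ N ∧ Set.EqOn f id M₀

/-- a filtration of a model `M` of cardinality `lam⁺`: an increasing continuous sequence
of models of cardinality `lam`, of length `lam⁺`, with union `M`. -/
def IsFiltration (D : AECData α) (lam : Cardinal.{u}) (M : Set α)
    (Ms : Ordinal.{u} → Set α) : Prop :=
  (∀ β < (Order.succ lam).ord, D.inCard lam (Ms β)) ∧
  (∀ β γ : Ordinal.{u}, β ≤ γ → γ < (Order.succ lam).ord → D.le (Ms β) (Ms γ)) ∧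
  (∀ β < (Order.succ lam).ord, Order.IsSuccLimit β → Ms β = ⋃ γ ∈ Set.Iio β, Ms γ) ∧
  M = ⋃ γ ∈ Set.Iio (Order.succ lam).ord, Ms γ

end AECData

/-- A semi-good non-forking `lam`-frame `s = (K, ⪯, ⌣, S^bs)`. -/
structure SemiGoodFrame {α : Type u} (D : AECData α) (lam : Cardinal.{u}) : Type u where
  infinite : ℵ₀ ≤ lam
  /-- `LST(K,⪯) ≤ lam` -/
  lst : ∀ N ∈ D.K, ∀ A : Set α, A ⊆ N →
    ∃ M ∈ D.K, A ⊆ M ∧ D.le M N ∧ Cardinal.mk M ≤ max (Cardinal.mk A) lam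
  nonempty : ∃ M : Set α, D.inCard lam M
  amalgamation : D.AmalgIn lam
  jep : ∀ M₁ M₂ : Set α, D.inCard lam M₁ → D.inCard lam M₂ →
    ∃ (N : Set α) (f : α → α), D.inCard lam N ∧ D.le M₁ N ∧ D.emb f M₂ N
  no_max : ∀ M : Set α, D.inCard lam M → ∃ N : Set α, D.inCard lam N ∧ D.le M N ∧ M ≠ N
  /-- the set of basic types over a model of cardinality `lam` -/
  Sbs : Set α → Set D.Tp
  /-- the non-forking relation `⌣(M₀, M₁, a, M₃)` -/
  dnf : Set α → Set α → α → Set α → Prop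
  Sbs_sub : ∀ M : Set α, D.inCard lam M → ∀ p ∈ Sbs M,
    ∃ (N : Set α) (a : α), D.inCard lam N ∧ D.le M N ∧ a ∈ N \ M ∧ p = D.tp a M N
  Sbs_invariant : ∀ (f : α → α) (M N N' : Set α) (a : α), D.le M N → a ∈ N →
    D.emb f N N' → D.tp a M N ∈ Sbs M → D.tp (f a) (f '' M) N' ∈ Sbs (f '' M)
  density : ∀ M N : Set α, D.inCard lam M → D.inCard lam N → D.le M N → M ≠ N →
    ∃ a ∈ N \ M, D.tp a M N ∈ Sbs M
  almost_stability : ∀ M : Set α, D.inCard lam M → Cardinal.mk (Sbs M) ≤ Order.succ lam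
  dnf_mem : ∀ {M₀ M₁ : Set α} {a : α} {M₃ : Set α}, dnf M₀ M₁ a M₃ →
    D.inCard lam M₀ ∧ D.inCard lam M₁ ∧ D.inCard lam M₃ ∧
    D.le M₀ M₁ ∧ D.le M₁ M₃ ∧ a ∈ M₃ \ M₁ ∧
    D.tp a M₀ M₃ ∈ Sbs M₀ ∧ D.tp a M₁ M₃ ∈ Sbs M₁
  dnf_invariant : ∀ {f : α → α} {M₀ M₁ : Set α} {a : α} {M₃ N : Set α},
    dnf M₀ M₁ a M₃ → D.emb f M₃ N → dnf (f '' M₀) (f '' M₁) (f a) (f '' M₃)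
  dnf_mono : ∀ {M₀ M₀' M₁' M₁ : Set α} {a : α} {M₃ M₃s M₃' : Set α},
    dnf M₀ M₁ a M₃ → D.le M₀ M₀' → D.le M₀' M₁' → D.le M₁' M₁ →
    D.le M₃ M₃s → D.inCard lam M₃' → D.le M₃' M₃s → D.le M₁' M₃' → a ∈ M₃' →
    dnf M₀' M₁' a M₃'
  local_character : ∀ δ : Ordinal.{u}, Order.IsSuccLimit δ → δ < (Order.succ lam).ord →
    ∀ Ms : Ordinal.{u} → Set α,
    (∀ β γ : Ordinal.{u}, β ≤ γ → γ ≤ δ → D.le (Ms β) (Ms γ)) →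
    (∀ β ≤ δ, Order.IsSuccLimit β → Ms β = ⋃ γ ∈ Set.Iio β, Ms γ) →
    (∀ β ≤ δ, D.inCard lam (Ms β)) →
    ∀ (N : Set α) (a : α), D.inCard lam N → D.le (Ms δ) N → a ∈ N \ Ms δ →
      D.tp a (Ms δ) N ∈ Sbs (Ms δ) → ∃ β < δ, dnf (Ms β) (Ms δ) a N
  uniqueness : ∀ (M N N₁ N₂ : Set α) (a b : α), dnf M N a N₁ → dnf M N b N₂ →
    D.tp a M N₁ = D.tp b M N₂ → D.tp a N N₁ = D.tp b N N₂
  symmetry : ∀ (M₀ M₁ M₃ : Set α) (a₁ a₂ : α),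
    D.inCard lam M₀ → D.inCard lam M₁ → D.inCard lam M₃ →
    D.le M₀ M₁ → D.le M₁ M₃ → a₁ ∈ M₁ → D.tp a₁ M₀ M₃ ∈ Sbs M₀ → dnf M₀ M₁ a₂ M₃ →
    ∃ M₂ M₃' : Set α, D.inCard lam M₂ ∧ D.inCard lam M₃' ∧ a₂ ∈ M₂ ∧
      D.le M₀ M₂ ∧ D.le M₂ M₃' ∧ D.le M₃ M₃' ∧ dnf M₀ M₂ a₁ M₃'
  extension : ∀ (M N M' : Set α) (a : α), D.le M N → D.inCard lam N →
    D.le M M' → a ∈ M' → D.tp a M M' ∈ Sbs M →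
    ∃ (N' : Set α) (b : α), D.inCard lam N' ∧ D.le N N' ∧ b ∈ N' ∧ dnf M N b N' ∧
      D.tp b M N' = D.tp a M M'
  continuity : ∀ δ : Ordinal.{u}, Order.IsSuccLimit δ → δ < (Order.succ lam).ord →
    ∀ Ms : Ordinal.{u} → Set α,
    (∀ β γ : Ordinal.{u}, β ≤ γ → γ ≤ δ → D.le (Ms β) (Ms γ)) →
    (∀ β ≤ δ, Order.IsSuccLimit β → Ms β = ⋃ γ ∈ Set.Iio β, Ms γ) →
    (∀ β ≤ δ, D.inCard lam (Ms β)) →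
    ∀ (N : Set α) (a : α), D.inCard lam N → D.le (Ms δ) N → a ∈ N →
      (∀ β : Ordinal.{u}, 0 < β → β < δ → dnf (Ms 0) (Ms β) a N) →
      dnf (Ms 0) (Ms δ) a N

namespace SemiGoodFrame

variable {α : Type u} {D : AECData α} {lam : Cardinal.{u}}

/-- `tp a N M₂` does not fork over `N₀` inside the frame (via a small witness model). -/
def nfk (F : SemiGoodFrame D lam) (N₀ N : Set α) (a : α) (M₂ : Set α) : Prop :=
  ∃ M' : Set α, D.inCard lam M' ∧ D.le N M' ∧ D.le M' M₂ ∧ a ∈ M' ∧ F.dnf N₀ N a M'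

/-- the lifted non-forking relation: the type `tp a M₁ M₂` does not fork over `M₀`
(`M₀ ⪯ M₁` models of cardinality `≥ lam`). -/
def nfLift (F : SemiGoodFrame D lam) (M₀ : Set α) (a : α) (M₁ M₂ : Set α) : Prop :=
  D.le M₀ M₁ ∧ D.le M₁ M₂ ∧ a ∈ M₂ \ M₁ ∧
  ∃ N₀ : Set α, D.inCard lam N₀ ∧ D.le N₀ M₀ ∧
    ∀ N : Set α, D.inCard lam N → D.le N₀ N → D.le N M₁ → F.nfk N₀ N a M₂

/-- the Galois type `p` (a type over `M₁`) does not fork over `M₀`, in the lifted sense. -/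
def TpNF (F : SemiGoodFrame D lam) (M₀ M₁ : Set α) (p : D.Tp) : Prop :=
  ∃ (a : α) (M₂ : Set α), p = D.tp a M₁ M₂ ∧ F.nfLift M₀ a M₁ M₂

/-- basic types over models of cardinality `> lam`: the types that do not fork over some
`⪯`-submodel of cardinality `lam`. -/
def SbsUp (F : SemiGoodFrame D lam) (M : Set α) : Set D.Tp :=
  {p | ∃ N₀ : Set α, D.inCard lam N₀ ∧ D.le N₀ M ∧ F.TpNF N₀ M p}

/-- symmetry for the lifted frame `s⁺` on models of cardinality `lam⁺` -/
def SymmetryPlus (F : SemiGoodFrame D lam) : Prop :=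
  ∀ (M₀ M₁ M₃ : Set α) (a₁ a₂ : α),
    D.inCard (Order.succ lam) M₀ → D.inCard (Order.succ lam) M₁ →
    D.inCard (Order.succ lam) M₃ →
    D.le M₀ M₁ → D.le M₁ M₃ → a₁ ∈ M₁ → D.tp a₁ M₀ M₃ ∈ F.SbsUp M₀ →
    F.nfLift M₀ a₂ M₁ M₃ →
    ∃ M₂ M₃' : Set α, D.inCard (Order.succ lam) M₂ ∧ D.inCard (Order.succ lam) M₃' ∧
      a₂ ∈ M₂ ∧ D.le M₀ M₂ ∧ D.le M₂ M₃' ∧ D.le M₃ M₃' ∧ F.nfLift M₀ a₁ M₂ M₃'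

/-- `s⁺` is a good non-forking `lam⁺`-frame. -/
structure GoodPlus (F : SemiGoodFrame D lam) : Prop where
  nonempty : ∃ M : Set α, D.inCard (Order.succ lam) M
  amalgamation : D.AmalgIn (Order.succ lam)
  jep : ∀ M₁ M₂ : Set α, D.inCard (Order.succ lam) M₁ → D.inCard (Order.succ lam) M₂ →
    ∃ (N : Set α) (f : α → α), D.inCard (Order.succ lam) N ∧ D.le M₁ N ∧ D.emb f M₂ N
  no_max : ∀ M : Set α, D.inCard (Order.succ lam) M →
    ∃ N : Set α, D.inCard (Order.succ lam) N ∧ D.le M N ∧ M ≠ N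
  density : ∀ M N : Set α, D.inCard (Order.succ lam) M → D.inCard (Order.succ lam) N →
    D.le M N → M ≠ N → ∃ a ∈ N \ M, D.tp a M N ∈ F.SbsUp M
  stability : ∀ M : Set α, D.inCard (Order.succ lam) M →
    Cardinal.mk (F.SbsUp M) ≤ Order.succ lam
  invariance : ∀ (f : α → α) (M N N' : Set α) (a : α), D.le M N → a ∈ N →
    D.emb f N N' → D.tp a M N ∈ F.SbsUp M → D.tp (f a) (f '' M) N' ∈ F.SbsUp (f '' M)
  monotonicity : ∀ (M₀ M₁ : Set α) (a : α) (M₂ M₃ : Set α),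
    D.inCard (Order.succ lam) M₁ → D.le M₀ M₁ → D.le M₁ M₂ → F.nfLift M₀ a M₂ M₃ →
    F.nfLift M₁ a M₂ M₃ ∧ F.nfLift M₀ a M₁ M₃
  local_character : ∀ δ : Ordinal.{u}, Order.IsSuccLimit δ →
    ∀ Ms : Ordinal.{u} → Set α,
    (∀ β γ : Ordinal.{u}, β ≤ γ → γ ≤ δ → D.le (Ms β) (Ms γ)) →
    (∀ β ≤ δ, Order.IsSuccLimit β → Ms β = ⋃ γ ∈ Set.Iio β, Ms γ) →
    (∀ β ≤ δ, D.inCard (Order.succ lam) (Ms β)) →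
    ∀ (N : Set α) (a : α), D.inCard (Order.succ lam) N → D.le (Ms δ) N →
      a ∈ N \ Ms δ → D.tp a (Ms δ) N ∈ F.SbsUp (Ms δ) →
      ∃ β < δ, F.nfLift (Ms β) a (Ms δ) N
  uniqueness : ∀ (M N : Set α) (p q : D.Tp),
    D.inCard (Order.succ lam) M → D.inCard (Order.succ lam) N → D.le M N →
    F.TpNF M N p → F.TpNF M N q → D.res p M = D.res q M → p = q
  symmetry : F.SymmetryPlus
  extension : ∀ (M N : Set α) (p : D.Tp),
    D.inCard (Order.succ lam) M → D.inCard (Order.succ lam) N → D.le M N →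
    p ∈ F.SbsUp M → ∃ q : D.Tp, q ∈ F.SbsUp N ∧ F.TpNF M N q ∧ D.res q M = p
  continuity : ∀ δ : Ordinal.{u}, Order.IsSuccLimit δ →
    ∀ Ms : Ordinal.{u} → Set α,
    (∀ β γ : Ordinal.{u}, β ≤ γ → γ ≤ δ → D.le (Ms β) (Ms γ)) →
    (∀ β ≤ δ, Order.IsSuccLimit β → Ms β = ⋃ γ ∈ Set.Iio β, Ms γ) →
    (∀ β ≤ δ, D.inCard (Order.succ lam) (Ms β)) →
    ∀ (N : Set α) (a : α), N ∈ D.K → D.le (Ms δ) N → a ∈ N \ Ms δ →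
      (∀ β : Ordinal.{u}, 0 < β → β < δ → F.nfLift (Ms 0) a (Ms β) N) →
      F.nfLift (Ms 0) a (Ms δ) N

/-- Definition 1.6(a): the sequence `⟨Ms β, as β : β < o⟩⌢⟨Ms o⟩` is independent over `M`. -/
def IndepOver (F : SemiGoodFrame D lam) (M : Set α) (Ms : Ordinal.{u} → Set α)
    (as : Ordinal.{u} → α) (o : Ordinal.{u}) : Prop :=
  (∀ β ≤ o, Ms β ∈ D.K) ∧
  (∀ β γ : Ordinal.{u}, β ≤ γ → γ ≤ o → D.le (Ms β) (Ms γ)) ∧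
  (∀ β ≤ o, Order.IsSuccLimit β → Ms β = ⋃ γ ∈ Set.Iio β, Ms γ) ∧
  D.le M (Ms 0) ∧
  ∀ β < o, F.nfLift M (as β) (Ms β) (Ms (β + 1))

/-- Definition 1.6(b): the sequence `⟨as β : β < o⟩` is independent in `(M, M₀, N)`. -/
def IndepIn3 (F : SemiGoodFrame D lam) (M M₀ N : Set α) (as : Ordinal.{u} → α)
    (o : Ordinal.{u}) : Prop :=
  D.le M M₀ ∧ D.le M₀ N ∧ (∀ β < o, as β ∈ N \ M) ∧
  ∃ (Ms : Ordinal.{u} → Set α) (Nplus : Set α),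
    Ms 0 = M₀ ∧ F.IndepOver M Ms as o ∧ Nplus ∈ D.K ∧ D.le N Nplus ∧ D.le (Ms o) Nplus

/-- `⟨as β : β < o⟩` is independent in `(M, N)`, i.e. in `(M, M, N)`. -/
def IndepIn (F : SemiGoodFrame D lam) (M N : Set α) (as : Ordinal.{u} → α)
    (o : Ordinal.{u}) : Prop :=
  F.IndepIn3 M M N as o

/-- a set `J` is independent in `(M, N)` if some enumeration of it is. -/
def IndepSet (F : SemiGoodFrame D lam) (M N : Set α) (J : Set α) : Prop :=
  ∃ (o : Ordinal.{u}) (as : Ordinal.{u} → α),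
    (∀ β < o, as β ∈ J) ∧ (∀ x ∈ J, ∃ β < o, as β = x) ∧
    (∀ β γ : Ordinal.{u}, β < o → γ < o → as β = as γ → β = γ) ∧
    F.IndepIn M N as o

/-- the `lam⁺`-continuity of serial independence property. -/
def ContSerialIndep (F : SemiGoodFrame D lam) : Prop :=
  ∀ βs : Ordinal.{u}, βs < (Order.succ lam).ord →
  ∀ M N : Set α, D.inCard (Order.succ lam) M → D.inCard (Order.succ lam) N → D.le M N →
  ∀ Ms : Ordinal.{u} → Set α, D.IsFiltration lam M Ms →
  ∀ as : Ordinal.{u} → α,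
    (∀ γ < (Order.succ lam).ord, F.IndepIn (Ms γ) N as βs) →
    F.IndepIn M N as βs

end SemiGoodFrame

section NF

variable {α : Type u} {D : AECData α} {lam : Cardinal.{u}}

/-- `⊗_NF`: the axioms of a non-forking relation on quadruples of models of
cardinality `lam`. -/
structure IsNFRel (F : SemiGoodFrame D lam)
    (NF : Set α → Set α → Set α → Set α → Prop) : Prop where
  mem : ∀ {M₀ M₁ M₂ M₃ : Set α}, NF M₀ M₁ M₂ M₃ →
    D.inCard lam M₀ ∧ D.inCard lam M₁ ∧ D.inCard lam M₂ ∧ D.inCard lam M₃ ∧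
    D.le M₀ M₁ ∧ D.le M₁ M₃ ∧ D.le M₀ M₂ ∧ D.le M₂ M₃ ∧ M₁ ∩ M₂ = M₀
  mono : ∀ {M₀ M₁ M₂ M₃ N₁ N₂ N₃ Ns : Set α}, NF M₀ M₁ M₂ M₃ →
    D.le N₁ M₁ → D.le N₂ M₂ → D.le M₀ N₁ → D.le M₀ N₂ →
    D.le N₁ N₃ → D.le N₂ N₃ → D.inCard lam N₃ →
    D.le M₃ Ns → D.le N₃ Ns → NF M₀ N₁ N₂ N₃
  ext : ∀ {N₀ N₁ N₂ : Set α}, D.inCard lam N₀ → D.inCard lam N₁ → D.inCard lam N₂ →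
    D.le N₀ N₁ → D.le N₀ N₂ → N₁ ∩ N₂ = N₀ →
    ∃ N₃ : Set α, D.inCard lam N₃ ∧ NF N₀ N₁ N₂ N₃
  weak_uniq : ∀ {N₀ N₁ N₂ Na Nb : Set α}, NF N₀ N₁ N₂ Na → NF N₀ N₁ N₂ Nb →
    ∃ (N : Set α) (f : α → α), N ∈ D.K ∧ D.le Na N ∧ D.emb f Nb N ∧
      Set.EqOn f id (N₁ ∪ N₂)
  symm : ∀ M₀ M₁ M₂ M₃ : Set α, NF M₀ M₁ M₂ M₃ ↔ NF M₀ M₂ M₁ M₃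
  long_trans : ∀ (δ : Ordinal.{u}) (Ma Mb : Ordinal.{u} → Set α),
    (∀ β γ : Ordinal.{u}, β ≤ γ → γ ≤ δ → D.le (Ma β) (Ma γ)) →
    (∀ β γ : Ordinal.{u}, β ≤ γ → γ ≤ δ → D.le (Mb β) (Mb γ)) →
    (∀ β ≤ δ, Order.IsSuccLimit β → Ma β = ⋃ γ ∈ Set.Iio β, Ma γ) →
    (∀ β ≤ δ, Order.IsSuccLimit β → Mb β = ⋃ γ ∈ Set.Iio β, Mb γ) →
    (∀ β < δ, NF (Ma β) (Ma (β + 1)) (Mb β) (Mb (β + 1))) →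
    NF (Ma 0) (Ma δ) (Mb 0) (Mb δ)
  iso : ∀ {f : α → α} {M₀ M₁ M₂ M₃ N : Set α}, NF M₀ M₁ M₂ M₃ → D.emb f M₃ N →
    NF (f '' M₀) (f '' M₁) (f '' M₂) (f '' M₃)

/-- the relation `NF` respects the frame `s`. -/
def Respects (F : SemiGoodFrame D lam)
    (NF : Set α → Set α → Set α → Set α → Prop) : Prop :=
  ∀ (M₀ M₁ M₂ M₃ : Set α) (a : α), NF M₀ M₁ M₂ M₃ → a ∈ M₁ \ M₀ →
    D.tp a M₀ M₁ ∈ F.Sbs M₀ → F.dnf M₀ M₂ a M₃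

/-- `NF-hat(N₀, N₁, M₀, M₁)`:  `N₀, N₁ ∈ K_lam`, `M₀, M₁ ∈ K_{lam⁺}` and there are
filtrations of `M₀` and `M₁` starting with `N₀` and `N₁` linked by `NF`. -/
def NFhat (D : AECData α) (lam : Cardinal.{u})
    (NF : Set α → Set α → Set α → Set α → Prop) (N₀ N₁ M₀ M₁ : Set α) : Prop :=
  D.inCard lam N₀ ∧ D.inCard lam N₁ ∧
  D.inCard (Order.succ lam) M₀ ∧ D.inCard (Order.succ lam) M₁ ∧
  ∃ F₀ F₁ : Ordinal.{u} → Set α,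
    D.IsFiltration lam M₀ F₀ ∧ D.IsFiltration lam M₁ F₁ ∧
    F₀ 0 = N₀ ∧ F₁ 0 = N₁ ∧
    ∀ β < (Order.succ lam).ord, NF (F₀ β) (F₁ β) (F₀ (β + 1)) (F₁ (β + 1))

/-- the relation `M₀ ⪯^NF_{lam⁺} M₁`. -/
def leNF (D : AECData α) (lam : Cardinal.{u})
    (NF : Set α → Set α → Set α → Set α → Prop) (M₀ M₁ : Set α) : Prop :=
  D.le M₀ M₁ ∧ ∃ N₀ N₁ : Set α, NFhat D lam NF N₀ N₁ M₀ M₁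

/-- `E` is a club (closed unbounded set) of the ordinal `o`. -/
def IsClubBelow (o : Ordinal.{u}) (E : Set Ordinal.{u}) : Prop :=
  E ⊆ Set.Iio o ∧ (∀ β < o, ∃ γ ∈ E, β ≤ γ) ∧
  ∀ β < o, Order.IsSuccLimit β → (∀ γ < β, ∃ δ ∈ E, γ < δ ∧ δ < β) → β ∈ E

/-- membership in the class `A` of pairs `(M, M⁺)` of models of cardinality `lam⁺`
with `M ⪯ M⁺`. -/
def memA (D : AECData α) (lam : Cardinal.{u}) (M Mp : Set α) : Prop :=
  D.inCard (Order.succ lam) M ∧ D.inCard (Order.succ lam) Mp ∧ D.le M Mp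

/-- the strict partial order `<_A` on pairs: `(M₁, M₁⁺) <_A (M₂, M₂⁺)`. -/
def ltA (D : AECData α) (lam : Cardinal.{u})
    (NF : Set α → Set α → Set α → Set α → Prop) (M₁ M₁p M₂ M₂p : Set α) : Prop :=
  leNF D lam NF M₁ M₂ ∧ D.le M₁p M₂p ∧ M₂ ∩ M₁p ≠ M₁

end NF

/-- the lifted frame `s⁺` satisfies basic stability. -/
theorem stmt4 {α : Type u} (D : AECData α) (lam : Cardinal.{u})
    (F : SemiGoodFrame D lam)
    (hAmalg : D.AmalgIn (Order.succ lam)) (hTame : D.Tame lam)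
    (M : Set α) (hM : D.inCard (Order.succ lam) M) :
    Cardinal.mk (F.SbsUp M) ≤ Order.succ lam := by
  classical
  obtain ⟨hMK, hMcard⟩ := hM
  set o : Ordinal.{u} := (Order.succ lam).ord with ho
  -- an enumeration of M by o.ToType
  have hmk : #o.ToType = #(↥M) := by
    rw [ho, Cardinal.mk_ord_toType, hMcard]
  obtain ⟨e⟩ := Cardinal.eq.mp hmk
  -- a subset A of M of cardinality lam
  obtain ⟨S, hS⟩ := Cardinal.le_mk_iff_exists_set.mp
    (show lam ≤ #(↥M) by rw [hMcard]; exact Order.le_succ lam)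
  set A : Set α := Subtype.val '' S with hA
  have hAM : A ⊆ M := by rintro x ⟨y, _, rfl⟩; exact y.2
  have hAcard : #(↥A) = lam := by
    rw [hA, Cardinal.mk_image_eq Subtype.val_injective, hS]
  -- the covering sets B i, i : o.ToType
  set Bf : o.ToType → Set α := fun i => A ∪ (fun j => ((e j : ↥M) : α)) '' (Set.Iic i)
    with hBf
  have hBM : ∀ i, Bf i ⊆ M := by
    intro i x hx
    rcases hx with hx | ⟨j, _, rfl⟩
    · exact hAM hx
    · exact (e j).2
  have hAB : ∀ i, A ⊆ Bf i := fun i => Set.subset_union_left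
  have hBcard : ∀ i, #(↥(Bf i)) ≤ lam := by
    intro i
    have h1 : #(↥(Set.Iio i)) ≤ lam :=
      Order.lt_succ_iff.mp (Cardinal.mk_Iio_ord_toType (c := Order.succ lam) i)
    have h2 : #(↥(Set.Iic i)) ≤ lam := by
      rw [← Set.Iio_insert]
      exact Cardinal.mk_insert_le.trans
        ((add_le_add_left h1 1).trans (le_of_eq (Cardinal.add_one_eq F.infinite)))
    calc #(↥(Bf i)) ≤ #(↥A) + #(↥((fun j => ((e j : ↥M) : α)) '' (Set.Iic i))) :=
          Cardinal.mk_union_le _ _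
      _ ≤ lam + lam := add_le_add (le_of_eq hAcard) ((Cardinal.mk_image_le).trans h2)
      _ = lam := Cardinal.add_eq_self F.infinite
  -- small submodels N i covering the B i
  have hN : ∀ i, ∃ N, Bf i ⊆ N ∧ D.le N M ∧ D.inCard lam N := by
    intro i
    obtain ⟨N, hNK, hsub, hle, hbd⟩ := F.lst M hMK (Bf i) (hBM i)
    refine ⟨N, hsub, hle, hNK, le_antisymm (hbd.trans (max_le (hBcard i) le_rfl)) ?_⟩
    rw [← hAcard]
    exact Cardinal.mk_le_mk_of_subset ((hAB i).trans hsub)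
  choose Nf hNB hNle hNcard using hN
  -- cofinality: every small subset of M is covered by some B i
  have cofinal : ∀ B : Set α, B ⊆ M → #(↥B) ≤ lam → ∃ i, B ⊆ Bf i := by
    intro B hBsub hBc
    set g : ↥B → o.ToType := fun b => e.symm ⟨b.1, hBsub b.2⟩ with hg
    set f : ↥B → Ordinal.{u} :=
      fun b => ((Ordinal.ToType.mk (o := o)).symm (g b) : Ordinal.{u}) with hf
    have hfo : ∀ b, f b < o := fun b => ((Ordinal.ToType.mk (o := o)).symm (g b)).2
    have hsup : iSup f < o := by
      refine Ordinal.iSup_lt_ord ?_ hfo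
      rw [ho, (Cardinal.isRegular_succ F.infinite).cof_eq]
      exact hBc.trans_lt (Order.lt_succ lam)
    refine ⟨Ordinal.ToType.mk (o := o) ⟨iSup f, hsup⟩, ?_⟩
    intro x hx
    refine Or.inr ⟨g ⟨x, hx⟩, ?_, ?_⟩
    · have h1 : (Ordinal.ToType.mk (o := o)).symm (g ⟨x, hx⟩) ≤ ⟨iSup f, hsup⟩ := by
        have := Ordinal.le_iSup f ⟨x, hx⟩
        exact Subtype.coe_le_coe.mp this
      have h2 := (Ordinal.ToType.mk (o := o)).le_iff_le.mpr h1
      rw [OrderIso.apply_symm_apply] at h2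
      exact Set.mem_Iic.mpr h2
    · show ((e (g ⟨x, hx⟩) : ↥M) : α) = x
      rw [hg]; simp
  -- extract the witnesses for each basic type p
  have hdata : ∀ p : ↥(F.SbsUp M), ∃ (a : α) (M₂ N₀' : Set α),
      (p : D.Tp) = D.tp a M M₂ ∧ D.le M M₂ ∧ a ∈ M₂ ∧
      D.inCard lam N₀' ∧ D.le N₀' M ∧
      ∀ N, D.inCard lam N → D.le N₀' N → D.le N M → F.nfk N₀' N a M₂ := by
    rintro ⟨p, N₀, hc, hle, a, M₂, hpeq, hle1, hle2, ha, N₀', hc', hle', hfa⟩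
    exact ⟨a, M₂, N₀', hpeq, hle2, ha.1, hc', D.le_trans hle' hle, hfa⟩
  choose af M₂f N₀f hpeq hleMM₂ haM₂ hN₀c hN₀le hforall using hdata
  -- choose the index
  have hidx : ∀ p, ∃ i, N₀f p ⊆ Bf i := fun p =>
    cofinal _ (D.le_subset (hN₀le p)) (le_of_eq (hN₀c p).2)
  choose idx hidx' using hidx
  have hsubNi : ∀ p, N₀f p ⊆ Nf (idx p) := fun p => (hidx' p).trans (hNB _)
  -- restriction data at Nf (idx p)
  have hrest : ∀ p, ∃ M', D.inCard lam M' ∧ D.le (Nf (idx p)) M' ∧ D.le M' (M₂f p) ∧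
      af p ∈ M' ∧
      D.res (p : D.Tp) (Nf (idx p)) = D.tp (af p) (Nf (idx p)) M' ∧
      D.tp (af p) (Nf (idx p)) M' ∈ F.Sbs (Nf (idx p)) := by
    intro p
    have h1 : D.le (N₀f p) (Nf (idx p)) :=
      D.coherence (hN₀le p) (hNle (idx p)) (hsubNi p)
    obtain ⟨M', hc, hl1, hl2, haM', hdnf⟩ :=
      hforall p (Nf (idx p)) (hNcard (idx p)) h1 (hNle (idx p))
    have hres : D.res (p : D.Tp) (Nf (idx p)) = D.tp (af p) (Nf (idx p)) (M₂f p) := by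
      rw [hpeq p]; exact D.res_tp (hNle (idx p)) (hleMM₂ p) (haM₂ p)
    have hmono : D.tp (af p) (Nf (idx p)) (M₂f p) = D.tp (af p) (Nf (idx p)) M' :=
      D.tp_mono hl1 hl2 haM'
    have hbs := (F.dnf_mem hdnf).2.2.2.2.2.2.2
    exact ⟨M', hc, hl1, hl2, haM', hres.trans hmono, hmono ▸ hbs⟩
  choose M'f hM'c hM'le1 hM'le2 haM' hresEq hbs using hrest
  -- the injection
  set Φ : ↥(F.SbsUp M) → Σ i : o.ToType, ↥(F.Sbs (Nf i)) := fun p =>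
    ⟨idx p, ⟨D.res (p : D.Tp) (Nf (idx p)), (hresEq p) ▸ hbs p⟩⟩ with hΦ
  have hΦinj : Function.Injective Φ := by
    intro p q h
    have h1 : idx p = idx q := congrArg Sigma.fst h
    have h2 : D.res (p : D.Tp) (Nf (idx p)) = D.res (q : D.Tp) (Nf (idx q)) :=
      congrArg (fun s : Σ i : o.ToType, ↥(F.Sbs (Nf i)) => (s.2 : D.Tp)) h
    rw [← h1] at h2
    -- tameness
    apply Subtype.ext
    refine hTame M ⟨hMK, hMcard⟩ (p : D.Tp)
      ⟨M₂f p, af p, hleMM₂ p, haM₂ p, hpeq p⟩ (q : D.Tp)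
      ⟨M₂f q, af q, hleMM₂ q, haM₂ q, hpeq q⟩ ?_
    intro N' hN'c hN'le
    -- a common small model N'' above N' and Nf (idx p)
    obtain ⟨N'', hN''K, hN''sub, hN''le, hN''bd⟩ := F.lst M hMK (N' ∪ Nf (idx p))
      (Set.union_subset (D.le_subset hN'le) (D.le_subset (hNle (idx p))))
    have hNiN'' : Nf (idx p) ⊆ N'' := Set.subset_union_right.trans hN''sub
    have hN''c : D.inCard lam N'' := by
      refine ⟨hN''K, le_antisymm (hN''bd.trans (max_le ?_ le_rfl)) ?_⟩
      · calc #(↥(N' ∪ Nf (idx p))) ≤ #(↥N') + #(↥(Nf (idx p))) :=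
              Cardinal.mk_union_le _ _
          _ ≤ lam + lam := add_le_add (le_of_eq hN'c.2) (le_of_eq (hNcard (idx p)).2)
          _ = lam := Cardinal.add_eq_self F.infinite
      · rw [← (hNcard (idx p)).2]
        exact Cardinal.mk_le_mk_of_subset hNiN''
    have hleN'N'' : D.le N' N'' :=
      D.coherence hN'le hN''le (Set.subset_union_left.trans hN''sub)
    have hleNiN'' : D.le (Nf (idx p)) N'' := D.coherence (hNle (idx p)) hN''le hNiN''
    have hN''refl : D.le N'' N'' := D.le_refl N'' hN''K
    -- p side
    have hN₀pN'' : D.le (N₀f p) N'' :=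
      D.coherence (hN₀le p) hN''le ((hsubNi p).trans hNiN'')
    obtain ⟨Mp, hMpc, hMple1, hMple2, haMp, hdnfp⟩ := hforall p N'' hN''c hN₀pN'' hN''le
    have hdnfp' : F.dnf (Nf (idx p)) N'' (af p) Mp :=
      F.dnf_mono hdnfp (D.coherence (hN₀le p) (hNle (idx p)) (hsubNi p)) hleNiN''
        hN''refl (D.le_refl Mp hMpc.1) hMpc (D.le_refl Mp hMpc.1) hMple1 haMp
    -- q side
    have hsubq : N₀f q ⊆ Nf (idx p) := by rw [h1]; exact hsubNi q
    have hN₀qN'' : D.le (N₀f q) N'' :=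
      D.coherence (hN₀le q) hN''le (hsubq.trans hNiN'')
    obtain ⟨Mq, hMqc, hMqle1, hMqle2, haMq, hdnfq⟩ := hforall q N'' hN''c hN₀qN'' hN''le
    have hdnfq' : F.dnf (Nf (idx p)) N'' (af q) Mq :=
      F.dnf_mono hdnfq (D.coherence (hN₀le q) (hNle (idx p)) hsubq) hleNiN''
        hN''refl (D.le_refl Mq hMqc.1) hMqc (D.le_refl Mq hMqc.1) hMqle1 haMq
    -- the types over Nf (idx p) agree
    have e1 : D.tp (af p) (Nf (idx p)) Mp = D.res (p : D.Tp) (Nf (idx p)) := by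
      rw [hpeq p, D.res_tp (hNle (idx p)) (hleMM₂ p) (haM₂ p)]
      exact (D.tp_mono (D.le_trans hleNiN'' hMple1) hMple2 haMp).symm
    have e2 : D.tp (af q) (Nf (idx p)) Mq = D.res (q : D.Tp) (Nf (idx p)) := by
      rw [hpeq q, D.res_tp (hNle (idx p)) (hleMM₂ q) (haM₂ q)]
      exact (D.tp_mono (D.le_trans hleNiN'' hMqle1) hMqle2 haMq).symm
    have htpNi : D.tp (af p) (Nf (idx p)) Mp = D.tp (af q) (Nf (idx p)) Mq :=
      e1.trans (h2.trans e2.symm)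
    have huniq := F.uniqueness (Nf (idx p)) N'' Mp Mq (af p) (af q) hdnfp' hdnfq' htpNi
    -- conclude for N'
    calc D.res (p : D.Tp) N' = D.tp (af p) N' (M₂f p) := by
          rw [hpeq p]; exact D.res_tp hN'le (hleMM₂ p) (haM₂ p)
      _ = D.res (D.tp (af p) N'' (M₂f p)) N' :=
          (D.res_tp hleN'N'' (D.le_trans hMple1 hMple2) (haM₂ p)).symm
      _ = D.res (D.tp (af p) N'' Mp) N' := by rw [D.tp_mono hMple1 hMple2 haMp]
      _ = D.res (D.tp (af q) N'' Mq) N' := by rw [huniq]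
      _ = D.res (D.tp (af q) N'' (M₂f q)) N' := by rw [D.tp_mono hMqle1 hMqle2 haMq]
      _ = D.tp (af q) N' (M₂f q) :=
          D.res_tp hleN'N'' (D.le_trans hMqle1 hMqle2) (haM₂ q)
      _ = D.res (q : D.Tp) N' := by
          rw [hpeq q]; exact (D.res_tp hN'le (hleMM₂ q) (haM₂ q)).symm
  -- cardinal count
  refine (Cardinal.mk_le_of_injective hΦinj).trans ?_
  rw [Cardinal.mk_sigma]
  calc (Cardinal.sum fun i => #(↥(F.Sbs (Nf i))))
      ≤ Cardinal.sum (fun _ : o.ToType => Order.succ lam) :=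
        Cardinal.sum_le_sum _ _ (fun i => F.almost_stability _ (hNcard i))
    _ = #o.ToType * Order.succ lam := Cardinal.sum_const' _ _
    _ = Order.succ lam := by
        rw [ho, Cardinal.mk_ord_toType]
        exact Cardinal.mul_eq_self (F.infinite.trans (Order.le_succ lam))
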